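/- arXiv:1701.06588 — 7 statements merged into one kernel-verified Lean document; each statement's English description precedes it below -/
import Mathlib

section
/- For all natural numbers l, m with 1 ≤ l ≤ m, ∑_{j=1}^{l} (-1)^{j+1} * C(l, j) * (l + m - j - 1)! / (m - j)! = (l + m - 1)! / m!. -/
open Finset

-- step lemma
lemma S_step (l k b : ℕ) :
    ∑ i ∈ range (l+2), (-1:ℚ)^i * ((l+1).choose i) * ((b+i).choose k)
    = (∑ i ∈ range (l+1), (-1:ℚ)^i * (l.choose i) * ((b+i).choose k))
      - ∑ i ∈ range (l+1), (-1:ℚ)^i * (l.choose i) * ((b+1+i).choose k) := by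
  rw [Finset.sum_range_succ' (fun i => (-1:ℚ)^i * ((l+1).choose i) * ((b+i).choose k))]
  have h1 : ∀ i ∈ range (l+1),
      (-1:ℚ)^(i+1) * ((l+1).choose (i+1)) * ((b+(i+1)).choose k)
      = -((-1:ℚ)^i * (l.choose i) * ((b+1+i).choose k))
        + (-1:ℚ)^(i+1) * (l.choose (i+1)) * ((b+(i+1)).choose k) := by
    intro i _
    rw [Nat.choose_succ_succ]
    have : b + (i+1) = b + 1 + i := by ring
    rw [this]
    push_cast
    ring
  rw [Finset.sum_congr rfl h1, Finset.sum_add_distrib]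
  have h2 : ∑ i ∈ range (l+1), ((-1:ℚ)^(i+1) * (l.choose (i+1)) * ((b+(i+1)).choose k))
      = ∑ i ∈ range (l+1), ((-1:ℚ)^i * (l.choose i) * ((b+i).choose k))
        - (-1:ℚ)^0 * (l.choose 0) * ((b+0).choose k) := by
    have := Finset.sum_range_succ' (fun i => (-1:ℚ)^i * (l.choose i) * ((b+i).choose k)) (l+1)
    rw [Finset.sum_range_succ (fun i => (-1:ℚ)^i * (l.choose i) * ((b+i).choose k)) (l+1)] at this
    have hz : (l.choose (l+1) : ℚ) = 0 := by
      rw [Nat.choose_eq_zero_of_lt (by omega)]; simp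
    rw [hz] at this
    simp only [mul_zero, zero_mul, add_zero] at this ⊢
    linarith [this]
  rw [h2, Finset.sum_neg_distrib]
  simp
  ring

lemma key_diff (l : ℕ) : ∀ k < l, ∀ b : ℕ,
    ∑ i ∈ range (l+1), (-1:ℚ)^i * (l.choose i) * ((b+i).choose k) = 0 := by
  induction l with
  | zero => intro k hk; omega
  | succ l ih =>
    intro k hk b
    have hs := S_step l k b
    rw [show l + 1 + 1 = l + 2 from rfl, hs]
    cases k with
    | zero => simp
    | succ k' =>
      have h1 : ∀ i ∈ range (l+1),
          (-1:ℚ)^i * (l.choose i) * ((b+1+i).choose (k'+1))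
          = (-1:ℚ)^i * (l.choose i) * ((b+i).choose k')
            + (-1:ℚ)^i * (l.choose i) * ((b+i).choose (k'+1)) := by
        intro i _
        rw [show b+1+i = (b+i)+1 by ring, Nat.choose_succ_succ]
        push_cast; ring
      rw [Finset.sum_congr rfl h1, Finset.sum_add_distrib, ih k' (by omega) b]
      ring

theorem binomial_factorial_identity_one (l m : ℕ) (hl : 1 ≤ l) (hlm : l ≤ m) :
    ∑ j ∈ Finset.Icc 1 l,
      ((-1 : ℚ) ^ (j + 1) * (l.choose j : ℚ) *
        ((l + m - j - 1).factorial : ℚ) / ((m - j).factorial : ℚ))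
      = ((l + m - 1).factorial : ℚ) / (m.factorial : ℚ) := by
  have hzero : ∑ j ∈ range (l+1), (-1:ℚ)^j * (l.choose j) * ((l+m-j-1).choose (l-1)) = 0 := by
    rw [← Finset.sum_range_reflect]
    have hc : ∀ j ∈ range (l+1),
        (-1:ℚ)^(l+1-1-j) * (l.choose (l+1-1-j)) * ((l+m-(l+1-1-j)-1).choose (l-1))
        = (-1:ℚ)^l * ((-1:ℚ)^j * (l.choose j) * ((m-1+j).choose (l-1))) := by
      intro j hj
      simp only [mem_range] at hj
      have hjl : j ≤ l := by omega
      rw [show l+1-1-j = l-j by omega, Nat.choose_symm hjl,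
        show l+m-(l-j)-1 = m-1+j by omega]
      have hsign : (-1:ℚ)^(l-j) = (-1:ℚ)^l * (-1:ℚ)^j := by
        have h1 : (-1:ℚ)^(l-j) * (-1:ℚ)^j = (-1:ℚ)^l := by
          rw [← pow_add]; congr 1; omega
        have h2 : (-1:ℚ)^j * (-1:ℚ)^j = 1 := by
          rw [← pow_add, ← two_mul, pow_mul]; norm_num
        calc (-1:ℚ)^(l-j) = (-1:ℚ)^(l-j) * ((-1:ℚ)^j * (-1:ℚ)^j) := by rw [h2, mul_one]
          _ = ((-1:ℚ)^(l-j) * (-1:ℚ)^j) * (-1:ℚ)^j := by ring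
          _ = (-1:ℚ)^l * (-1:ℚ)^j := by rw [h1]
      rw [hsign]; ring
    rw [Finset.sum_congr rfl hc, ← Finset.mul_sum, key_diff l (l-1) (by omega) (m-1), mul_zero]
  have hsplit : ∑ j ∈ Icc 1 l, (-1:ℚ)^(j+1) * (l.choose j) * ((l+m-j-1).choose (l-1))
      = ((l+m-1).choose (l-1) : ℚ) := by
    have h0 : range (l+1) = insert 0 (Icc 1 l) := by
      ext x; simp [Finset.mem_range, Finset.mem_Icc]; omega
    rw [h0, Finset.sum_insert (by simp)] at hzero
    have h1 : ∑ j ∈ Icc 1 l, (-1:ℚ)^(j+1) * (l.choose j) * ((l+m-j-1).choose (l-1))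
        = -∑ j ∈ Icc 1 l, (-1:ℚ)^j * (l.choose j) * ((l+m-j-1).choose (l-1)) := by
      rw [← Finset.sum_neg_distrib]
      apply Finset.sum_congr rfl
      intro j _; ring
    simp only [pow_zero, Nat.choose_zero_right, Nat.cast_one, one_mul, Nat.sub_zero] at hzero
    rw [h1]; linarith
  have hfac : ∀ j ∈ Icc 1 l, ((l+m-j-1).factorial : ℚ) / ((m-j).factorial : ℚ)
      = ((l+m-j-1).choose (l-1) : ℚ) * ((l-1).factorial : ℚ) := by
    intro j hj
    simp only [mem_Icc] at hj
    have h := Nat.choose_mul_factorial_mul_factorial (show l-1 ≤ l+m-j-1 by omega)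
    rw [show l+m-j-1-(l-1) = m-j by omega] at h
    have h2 : ((l+m-j-1).factorial : ℚ)
        = ((l+m-j-1).choose (l-1) : ℚ) * ((l-1).factorial : ℚ) * ((m-j).factorial : ℚ) := by
      exact_mod_cast h.symm
    rw [h2]
    field_simp
  have hrhs : ((l+m-1).factorial : ℚ) / (m.factorial : ℚ)
      = ((l+m-1).choose (l-1) : ℚ) * ((l-1).factorial : ℚ) := by
    have h := Nat.choose_mul_factorial_mul_factorial (show l-1 ≤ l+m-1 by omega)
    rw [show l+m-1-(l-1) = m by omega] at h
    have h2 : ((l+m-1).factorial : ℚ)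
        = ((l+m-1).choose (l-1) : ℚ) * ((l-1).factorial : ℚ) * (m.factorial : ℚ) := by
      exact_mod_cast h.symm
    rw [h2]
    field_simp
  calc ∑ j ∈ Finset.Icc 1 l, ((-1 : ℚ) ^ (j + 1) * (l.choose j : ℚ) *
        ((l + m - j - 1).factorial : ℚ) / ((m - j).factorial : ℚ))
      = ∑ j ∈ Icc 1 l, ((-1:ℚ)^(j+1) * (l.choose j) * ((l+m-j-1).choose (l-1))) * ((l-1).factorial : ℚ) := by
        apply Finset.sum_congr rfl
        intro j hj
        rw [mul_div_assoc, hfac j hj]; ring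
    _ = (∑ j ∈ Icc 1 l, (-1:ℚ)^(j+1) * (l.choose j) * ((l+m-j-1).choose (l-1))) * ((l-1).factorial : ℚ) := by
        rw [← Finset.sum_mul]
    _ = ((l+m-1).choose (l-1) : ℚ) * ((l-1).factorial : ℚ) := by rw [hsplit]
    _ = ((l+m-1).factorial : ℚ) / (m.factorial : ℚ) := hrhs.symm
end

section
/- For all natural numbers l, m with 1 ≤ m ≤ l, ∑_{j=1}^{m} (-1)^{j+1} * C(m, j) * (l + m - j - 1)! / (l - j)! = (l + m - 1)! / l!. -/
open Finset Function

open fwdDiff in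
lemma aux_cast_fwdDiff (n : ℕ) (F : ℕ → ℤ) :
    (fwdDiff 1)^[n] (fun x ↦ (F x : ℚ)) = fun x ↦ (((fwdDiff 1)^[n] F) x : ℚ) := by
  induction n with
  | zero => rfl
  | succ n ih =>
    rw [Function.iterate_succ_apply', Function.iterate_succ_apply', ih]
    funext x
    simp [fwdDiff]

open fwdDiff in
lemma aux_shift_fwdDiff (n c : ℕ) (F : ℕ → ℚ) :
    (fwdDiff 1)^[n] (fun x ↦ F (x + c)) = fun x ↦ ((fwdDiff 1)^[n] F) (x + c) := by
  induction n with
  | zero => rfl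
  | succ n ih =>
    rw [Function.iterate_succ_apply', Function.iterate_succ_apply', ih]
    funext x
    simp [fwdDiff, add_right_comm]

open fwdDiff in
lemma aux_cast_fwdDiff' (n : ℕ) (F : ℕ → ℤ) :
    (fwdDiff 1)^[n] ((Int.cast : ℤ → ℚ) ∘ F) = (Int.cast : ℤ → ℚ) ∘ ((fwdDiff 1)^[n] F) := by
  induction n with
  | zero => rfl
  | succ n ih =>
    rw [Function.iterate_succ_apply', Function.iterate_succ_apply', ih]
    funext x
    simp [fwdDiff]

open fwdDiff in
lemma aux_shift_fwdDiff' (n c : ℕ) (F : ℕ → ℤ) :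
    (fwdDiff 1)^[n] (F ∘ (fun x : ℕ ↦ x + c)) = ((fwdDiff 1)^[n] F) ∘ (fun x : ℕ ↦ x + c) := by
  induction n with
  | zero => rfl
  | succ n ih =>
    rw [Function.iterate_succ_apply', Function.iterate_succ_apply', ih]
    funext x
    simp [fwdDiff, add_right_comm]

open fwdDiff in
lemma aux_fwdDiff_poly_zero (m' : ℕ) :
    (fwdDiff 1)^[m' + 1] (fun x : ℕ ↦ (((x + m').factorial : ℚ) / (x.factorial : ℚ)))
      = fun _ ↦ 0 := by
  have hf : (fun x : ℕ ↦ (((x + m').factorial : ℚ) / (x.factorial : ℚ)))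
      = (m'.factorial : ℚ) •
          ((Int.cast : ℤ → ℚ) ∘ ((fun y : ℕ ↦ (y.choose m' : ℤ)) ∘ (fun x : ℕ ↦ x + m'))) := by
    funext x
    simp only [Pi.smul_apply, Function.comp_apply, smul_eq_mul]
    have h := Nat.choose_mul_factorial_mul_factorial (Nat.le_add_left m' x)
    rw [Nat.add_sub_cancel] at h
    have hx : (x.factorial : ℚ) ≠ 0 := Nat.cast_ne_zero.2 x.factorial_ne_zero
    field_simp
    push_cast [← h]
    ring
  have hchoose : (fwdDiff 1)^[m' + 1] (fun y : ℕ ↦ (y.choose m' : ℤ)) = fun _ ↦ 0 := by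
    have h1 : (fwdDiff 1)^[m'] (fun y : ℕ ↦ (y.choose m' : ℤ)) = fun y ↦ ((1 : ℤ)) := by
      have := fwdDiff_iter_choose 0 m'
      simpa using this
    funext x
    rw [Function.iterate_succ_apply', h1]
    simp [fwdDiff]
  rw [hf, fwdDiff_iter_const_smul, aux_cast_fwdDiff', aux_shift_fwdDiff', hchoose]
  funext x
  simp

theorem binomial_factorial_identity_symmetric (l m : ℕ) (hm : 1 ≤ m) (hml : m ≤ l) :
    ∑ j ∈ Finset.Icc 1 m,
      ((-1 : ℚ) ^ (j + 1) * (m.choose j : ℚ) *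
        ((l + m - j - 1).factorial : ℚ) / ((l - j).factorial : ℚ))
      = ((l + m - 1).factorial : ℚ) / (l.factorial : ℚ) := by
  obtain ⟨m', rfl⟩ : ∃ m', m = m' + 1 := ⟨m - 1, by omega⟩
  set f : ℕ → ℚ := fun x ↦ (((x + m').factorial : ℚ) / (x.factorial : ℚ)) with hf
  have key : (0 : ℚ)
      = ∑ k ∈ Finset.range (m' + 1 + 1),
          (((-1 : ℤ) ^ (m' + 1 - k) * ((m' + 1).choose k) : ℤ)) • f (l - (m' + 1) + k • 1) := by
    rw [← fwdDiff_iter_eq_sum_shift, aux_fwdDiff_poly_zero]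
  have key2 : (0 : ℚ)
      = ∑ j ∈ Finset.range (m' + 2), ((-1 : ℚ) ^ j * ((m' + 1).choose j : ℚ) * f (l - j)) := by
    rw [key, ← Finset.sum_range_reflect]
    refine Finset.sum_congr rfl fun k hk ↦ ?_
    simp only [Finset.mem_range] at hk
    have hk' : k ≤ m' + 1 := by omega
    have e1 : m' + 1 + 1 - 1 - k = m' + 1 - k := by omega
    rw [e1]
    have e2 : m' + 1 - (m' + 1 - k) = k := by omega
    have e3 : (m' + 1).choose (m' + 1 - k) = (m' + 1).choose k := Nat.choose_symm hk'
    have e4 : l - (m' + 1) + (m' + 1 - k) • 1 = l - k := by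
      simp only [smul_eq_mul, mul_one]; omega
    rw [e2, e3, e4, zsmul_eq_mul]
    push_cast
    ring
  have hsplit : Finset.range (m' + 2) = insert 0 (Finset.Icc 1 (m' + 1)) := by
    ext x; simp; omega
  rw [hsplit, Finset.sum_insert (by simp)] at key2
  simp only [pow_zero, Nat.choose_zero_right, Nat.cast_one, one_mul, Nat.sub_zero] at key2
  have hterm : ∀ j ∈ Finset.Icc 1 (m' + 1),
      ((-1 : ℚ) ^ (j + 1) * (((m' + 1).choose j : ℕ) : ℚ) *
          ((l + (m' + 1) - j - 1).factorial : ℚ) / ((l - j).factorial : ℚ))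
        = -((-1 : ℚ) ^ j * (((m' + 1).choose j : ℕ) : ℚ) * f (l - j)) := by
    intro j hj
    simp only [Finset.mem_Icc] at hj
    have h4 : l + (m' + 1) - j - 1 = (l - j) + m' := by omega
    rw [h4, hf]
    ring
  rw [Finset.sum_congr rfl hterm, Finset.sum_neg_distrib]
  have h5 : l + (m' + 1) - 1 = l + m' := by omega
  rw [h5]
  have : ((l + m').factorial : ℚ) / (l.factorial : ℚ) = f l := rfl
  rw [this]
  linarith [key2]
end

section
/- For all natural numbers m, l with l ≤ m, the sum ∑_{j=0}^{min(l, m-l)} 4^j * m! / ((m - j - l)! * (2j)! * (l - j)!) * 1/(2j + 1) equals (2m + 1)! / ((2l + 1)! * (2m - 2l + 1)!). -/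
/-!
Multiplying by `2(m + 1)` turns the `j`-th summand into `2^(2j+1) C(m+1, 2j+1) C(m-2j, l-j)` and the
right-hand side into `C(2m+2, 2l+1)`. This identity compares the coefficients of `X^(2l+1)` in
`(1 + X)^(2m+2) = (2X + (1 + X²))^(m+1)`: since `1 + X²` is even, only the odd powers `(2X)^(2j+1)`
contribute, and `(1 + X²)^(m-2j)` supplies `X^(2(l-j))` with coefficient `C(m-2j, l-j)`.
-/

open Finset Polynomial

theorem Polynomial.coeff_one_add_X_sq_pow (R : Type*) [CommSemiring R] (a n : ℕ) :
    ((1 + X ^ 2 : R[X]) ^ a).coeff n = if 2 ∣ n then (a.choose (n / 2) : R) else 0 := by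
  have : (1 + X ^ 2 : R[X]) ^ a = expand R 2 ((1 + X) ^ a) := by simp
  rw [this, coeff_expand two_pos, coeff_one_add_X_pow]

theorem Polynomial.coeff_two_X_pow_mul_one_add_X_sq_pow (R : Type*) [CommSemiring R]
    (k a d : ℕ) :
    ((2 * X) ^ k * (1 + X ^ 2 : R[X]) ^ a).coeff d =
      if k ≤ d ∧ 2 ∣ d - k then 2 ^ k * (a.choose ((d - k) / 2) : R) else 0 := by
  rw [mul_pow, show (2 : R[X]) ^ k = C (2 ^ k) by rw [C_pow, map_ofNat], mul_assoc, coeff_C_mul,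
    coeff_X_pow_mul', coeff_one_add_X_sq_pow]
  by_cases hk : k ≤ d <;> simp [hk]

theorem Nat.choose_even_odd_eq_sum (m l : ℕ) :
    (2 * m + 2).choose (2 * l + 1) =
      ∑ j ∈ range (min l (m - l) + 1),
        (m + 1).choose (2 * j + 1) * 2 ^ (2 * j + 1) * (m - 2 * j).choose (l - j) := by
  have hsq : (1 + X : ℕ[X]) ^ (2 * m + 2) = (2 * X + (1 + X ^ 2)) ^ (m + 1) := by
    rw [← mul_add_one, pow_mul]
    ring
  have hcoeff := congrArg (coeff · (2 * l + 1)) hsq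
  simp only [coeff_one_add_X_pow, Nat.cast_id] at hcoeff
  rw [add_pow, finsetSum_coeff] at hcoeff
  simp only [coeff_mul_natCast, coeff_two_X_pow_mul_one_add_X_sq_pow, Nat.cast_id] at hcoeff
  rw [hcoeff]
  refine (sum_of_injOn (2 * · + 1) ?_ ?_ ?_ ?_).symm
  · exact fun _ _ _ _ h => by simpa using h
  · intro j hj
    simp only [coe_range, Set.mem_Iio] at hj ⊢
    omega
  · intro k hkm hk
    simp only [mem_range] at hkm
    simp only [coe_range, Set.mem_image, Set.mem_Iio, not_exists, not_and] at hk
    split_ifs with h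
    · obtain ⟨j, rfl⟩ : Odd k := Nat.odd_iff.2 (by omega)
      have hlt : m + 1 - (2 * j + 1) < (2 * l + 1 - (2 * j + 1)) / 2 := by
        have := hk j
        omega
      rw [Nat.choose_eq_zero_of_lt hlt, mul_zero, zero_mul]
    · simp
  · intro j hj
    simp only [mem_range] at hj
    rw [if_pos (by omega), show (2 * l + 1 - (2 * j + 1)) / 2 = l - j by omega,
      show m + 1 - (2 * j + 1) = m - 2 * j by omega]
    ring

theorem trinomial_term_eq_choose_mul_choose_div {m l j : ℕ} (hjl : j ≤ l) (hjm : j + l ≤ m) :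
    (4 : ℚ) ^ j * (m.factorial : ℚ) /
        (((m - j - l).factorial : ℚ) * ((2 * j).factorial : ℚ) * ((l - j).factorial : ℚ))
        * (1 / (2 * (j : ℚ) + 1))
      = (((m + 1).choose (2 * j + 1) * 2 ^ (2 * j + 1) * (m - 2 * j).choose (l - j) : ℕ) : ℚ)
        / (2 * (m + 1)) := by
  rw [Nat.cast_mul, Nat.cast_mul, Nat.cast_choose ℚ (by omega : 2 * j + 1 ≤ m + 1),
    Nat.cast_choose ℚ (by omega : l - j ≤ m - 2 * j),
    show m + 1 - (2 * j + 1) = m - 2 * j by omega,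
    show m - 2 * j - (l - j) = m - j - l by omega,
    Nat.factorial_succ m, Nat.factorial_succ (2 * j)]
  push_cast
  rw [pow_succ, pow_mul]
  field_simp
  ring

theorem factorial_div_factorial_mul_factorial_eq_choose_div {m l : ℕ} (hlm : l ≤ m) :
    ((2 * m + 1).factorial : ℚ) /
        (((2 * l + 1).factorial : ℚ) * ((2 * m - 2 * l + 1).factorial : ℚ))
      = ((2 * m + 2).choose (2 * l + 1) : ℚ) / (2 * (m + 1)) := by
  rw [Nat.cast_choose ℚ (by omega : 2 * l + 1 ≤ 2 * m + 2),
    show 2 * m + 2 - (2 * l + 1) = 2 * m - 2 * l + 1 by omega, Nat.factorial_succ (2 * m + 1)]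
  push_cast
  field_simp
  ring

theorem trinomial_sum_identity (m l : ℕ) (hlm : l ≤ m) :
    ∑ j ∈ Finset.range (min l (m - l) + 1),
      ((4 : ℚ) ^ j * (m.factorial : ℚ) /
        (((m - j - l).factorial : ℚ) * ((2 * j).factorial : ℚ) * ((l - j).factorial : ℚ))
        * (1 / (2 * (j : ℚ) + 1)))
      = ((2 * m + 1).factorial : ℚ) /
        (((2 * l + 1).factorial : ℚ) * ((2 * m - 2 * l + 1).factorial : ℚ)) := by
  rw [factorial_div_factorial_mul_factorial_eq_choose_div hlm, Nat.choose_even_odd_eq_sum,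
    Nat.cast_sum, sum_div]
  refine sum_congr rfl fun j hj => ?_
  rw [mem_range] at hj
  exact trinomial_term_eq_choose_mul_choose_div (by omega) (by omega)
end

section
/- For all natural numbers m, l with l ≤ m, the identity (2m - 2l + 1)!! * ∑_{j=0}^{min(l, m-l)} 4^j * C(m; m-j-l, 2j, l-j) / (2j + 1) = ((2m + 1)!! / (2l + 1)!!) * C(m, l) holds. -/
/-!
Write `r j = (2j)‼ / (2j+1)‼ = 4^j (j!)² / (2j+1)!` and
`S a b = ∑ⱼ r j * C(a, j) * C(b, j)`. By the second form of `r j`, the `j`-th summand is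
`C(m, l) * r j * C(l, j) * C(m-l, j)`, so the left-hand side is
`(2(m-l)+1)‼ * C(m, l) * S l (m-l)` and the theorem reduces to `S a b = (2a+2b+1)‼ / ((2a+1)‼ * (2b+1)‼)`.
This follows by induction on `a` from `(2a+3) * S (a+1) b = (2a+2b+3) * S a b`, a
Zeilberger-style recurrence whose summand difference telescopes against the certificate
`R j = -(2j+1) * r j * C(a, j-1) * C(b, j)`.
-/

open Finset Nat

noncomputable def doubleFactorialRatio (j : ℕ) : ℚ :=
  ((2 * j)‼ : ℚ) / ((2 * j + 1)‼ : ℚ)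

lemma doubleFactorialRatio_zero : doubleFactorialRatio 0 = 1 := by
  norm_num [doubleFactorialRatio]

lemma doubleFactorialRatio_succ (j : ℕ) :
    (2 * (j : ℚ) + 3) * doubleFactorialRatio (j + 1)
      = (2 * (j : ℚ) + 2) * doubleFactorialRatio j := by
  rw [doubleFactorialRatio, doubleFactorialRatio, show 2 * (j + 1) = 2 * j + 2 by ring,
    show 2 * j + 2 + 1 = 2 * j + 1 + 2 by ring, doubleFactorial_add_two, doubleFactorial_add_two]
  push_cast
  field_simp
  ring

lemma doubleFactorialRatio_eq_factorial (j : ℕ) :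
    doubleFactorialRatio j = 4 ^ j * (j ! : ℚ) ^ 2 / (2 * j + 1)! := by
  have h : ((2 * j + 1)! : ℚ) = (2 * j + 1)‼ * (2 ^ j * j !) := by
    rw [factorial_eq_mul_doubleFactorial, doubleFactorial_two_mul]
    push_cast
    ring
  rw [doubleFactorialRatio, h, doubleFactorial_two_mul, show (4 : ℚ) ^ j = 2 ^ j * 2 ^ j by
    rw [← mul_pow]; norm_num]
  push_cast
  field_simp

lemma cast_choose_succ_right_eq {R : Type*} [Ring R] (n k : ℕ) :
    (n.choose (k + 1) : R) * (k + 1) = n.choose k * ((n : R) - k) := by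
  rcases lt_or_ge k n with hkn | hnk
  · have h := congrArg (Nat.cast : ℕ → R) (choose_succ_right_eq n k)
    push_cast [Nat.cast_sub hkn.le] at h
    exact h
  · rcases hnk.eq_or_lt with rfl | hnk
    · simp
    · simp [choose_eq_zero_of_lt hnk, choose_eq_zero_of_lt (Nat.lt_succ_of_lt hnk)]

section RatioChooseSum

variable (a b : ℕ)

noncomputable def ratioChooseSum : ℚ :=
  ∑ j ∈ range (a + 1), doubleFactorialRatio j * a.choose j * b.choose j

noncomputable def ratioChooseCertificate : ℕ → ℚ
  | 0 => 0
  | j + 1 => -(2 * (j : ℚ) + 3) * doubleFactorialRatio (j + 1) * a.choose j * b.choose (j + 1)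

lemma ratioChooseCertificate_sub (j : ℕ) :
    (2 * (a : ℚ) + 3) * (doubleFactorialRatio j * (a + 1).choose j * b.choose j)
      - (2 * (a : ℚ) + 2 * b + 3) * (doubleFactorialRatio j * a.choose j * b.choose j)
    = ratioChooseCertificate a b (j + 1) - ratioChooseCertificate a b j := by
  cases j with
  | zero =>
    have h := doubleFactorialRatio_succ 0
    norm_num [doubleFactorialRatio_zero] at h
    simp [ratioChooseCertificate, doubleFactorialRatio_zero, h]
  | succ j =>
    have hr := doubleFactorialRatio_succ (j + 1)
    have ha := cast_choose_succ_right_eq (R := ℚ) a j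
    have hb := cast_choose_succ_right_eq (R := ℚ) b (j + 1)
    rw [choose_succ_succ]
    simp only [ratioChooseCertificate, cast_add]
    push_cast at hr ha hb ⊢
    linear_combination (a.choose (j + 1) * b.choose (j + 2) : ℚ) * hr
      - 2 * doubleFactorialRatio (j + 1) * b.choose (j + 1) * ha
      + 2 * doubleFactorialRatio (j + 1) * a.choose (j + 1) * hb

lemma ratioChooseSum_succ :
    (2 * (a : ℚ) + 3) * ratioChooseSum (a + 1) b
      = (2 * (a : ℚ) + 2 * b + 3) * ratioChooseSum a b := by
  have htop : ratioChooseSum a b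
      = ∑ j ∈ range (a + 2), doubleFactorialRatio j * a.choose j * b.choose j := by
    simp [ratioChooseSum, sum_range_succ _ (a + 1), choose_succ_self]
  have hend : ratioChooseCertificate a b (a + 2) = 0 := by
    simp [ratioChooseCertificate, choose_succ_self]
  have htelescope := sum_range_sub (ratioChooseCertificate a b) (a + 2)
  rw [hend, ratioChooseCertificate, ← sum_congr rfl fun j _ ↦ ratioChooseCertificate_sub a b j,
    sum_sub_distrib, ← mul_sum, ← mul_sum, ← htop] at htelescope
  rw [ratioChooseSum]
  linear_combination htelescope

end RatioChooseSum

lemma ratioChooseSum_mul_doubleFactorial (a b : ℕ) :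
    ratioChooseSum a b * (2 * a + 1)‼ * (2 * b + 1)‼ = (2 * a + 2 * b + 1)‼ := by
  induction a with
  | zero => simp [ratioChooseSum, doubleFactorialRatio_zero]
  | succ a ih =>
    have hrec := ratioChooseSum_succ a b
    rw [show 2 * (a + 1) + 1 = 2 * a + 1 + 2 by ring,
      show 2 * (a + 1) + 2 * b + 1 = 2 * a + 2 * b + 1 + 2 by ring,
      doubleFactorial_add_two, doubleFactorial_add_two]
    push_cast
    rw [← ih]
    linear_combination (↑(2 * a + 1)‼ * ↑(2 * b + 1)‼ : ℚ) * hrec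

lemma trinomial_div_eq_choose_mul {m l j : ℕ} (hlm : l ≤ m) (hjl : j ≤ l)
    (hjml : j ≤ m - l) :
    (4 : ℚ) ^ j * (m ! / ((m - j - l)! * (2 * j)! * (l - j)!)) / (2 * j + 1)
      = m.choose l * (doubleFactorialRatio j * l.choose j * (m - l).choose j) := by
  rw [doubleFactorialRatio_eq_factorial, factorial_succ, cast_choose ℚ hlm, cast_choose ℚ hjl,
    cast_choose ℚ hjml, show m - j - l = m - l - j by omega]
  push_cast
  field_simp

lemma sum_range_mul_choose_mul_choose_of_min_le {R : Type*} [Semiring R] (f : ℕ → R)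
    {a b n : ℕ} (hn : min a b ≤ n) :
    ∑ j ∈ range (min a b + 1), f j * a.choose j * b.choose j
      = ∑ j ∈ range (n + 1), f j * a.choose j * b.choose j := by
  refine sum_subset (range_subset_range.mpr (by omega)) fun j _ hj ↦ ?_
  rcases lt_or_ge a j with haj | hbj
  · simp [choose_eq_zero_of_lt haj]
  · simp [choose_eq_zero_of_lt (show b < j by simp at hj; omega)]

theorem doubleFactorial_trinomial_sum_identity (m l : ℕ) (hlm : l ≤ m) :
    ((2 * m - 2 * l + 1)‼ : ℚ) *
      ∑ j ∈ Finset.range (min l (m - l) + 1),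
        ((4 : ℚ) ^ j *
          ((m.factorial : ℚ) /
            (((m - j - l).factorial : ℚ) * ((2 * j).factorial : ℚ) * ((l - j).factorial : ℚ)))
          / (2 * (j : ℚ) + 1))
      = (((2 * m + 1)‼ : ℚ) / ((2 * l + 1)‼ : ℚ)) * (m.choose l : ℚ) := by
  have hterm : ∀ j ∈ range (min l (m - l) + 1),
      (4 : ℚ) ^ j * (m ! / ((m - j - l)! * (2 * j)! * (l - j)!)) / (2 * j + 1)
        = m.choose l * (doubleFactorialRatio j * l.choose j * (m - l).choose j) := fun j hj ↦
    trinomial_div_eq_choose_mul hlm (by simp at hj; omega) (by simp at hj; omega)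
  have hsum := ratioChooseSum_mul_doubleFactorial l (m - l)
  rw [show 2 * l + 2 * (m - l) = 2 * m by omega] at hsum
  rw [sum_congr rfl hterm, ← mul_sum,
    sum_range_mul_choose_mul_choose_of_min_le _ (min_le_left _ _), ← ratioChooseSum,
    show 2 * m - 2 * l = 2 * (m - l) by omega, ← hsum]
  field_simp
end

section
/- Let l ≥ 1 and m ≥ l be natural numbers. Then the (l-1)-th derivative of the polynomial function x ↦ ∑_{j=0}^{l} C(l,j) * x^{l+m-j-1}, evaluated at x = -1, equals ∑_{j=0}^{l} C(l,j) * ((l+m-j-1)!/(m-j)!) * (-1)^{m-j}, and this value is 0. -/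
open Finset Polynomial

lemma iteratedDeriv_poly_eval (n : ℕ) (P : Polynomial ℝ) :
    iteratedDeriv n (fun x => P.eval x) = fun x => (derivative^[n] P).eval x := by
  induction n generalizing P with
  | zero => simp
  | succ n ih =>
    rw [iteratedDeriv_succ', Function.iterate_succ_apply, ← ih (derivative P)]
    have h : (deriv fun x => P.eval x) = fun x => (derivative P).eval x :=
      funext fun x => Polynomial.deriv P
    rw [h]

theorem iteratedDeriv_polynomial_at_neg_one (l m : ℕ) (hl : 1 ≤ l) (hm : l ≤ m) :
    iteratedDeriv (l - 1)
        (fun x : ℝ => ∑ j ∈ Finset.range (l + 1), (l.choose j : ℝ) * x ^ (l + m - j - 1)) (-1)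
      = ∑ j ∈ Finset.range (l + 1),
          (l.choose j : ℝ) * (((l + m - j - 1).factorial : ℝ) / ((m - j).factorial : ℝ)) *
            (-1 : ℝ) ^ (m - j)
    ∧ iteratedDeriv (l - 1)
        (fun x : ℝ => ∑ j ∈ Finset.range (l + 1), (l.choose j : ℝ) * x ^ (l + m - j - 1)) (-1)
      = 0 := by
  set P : Polynomial ℝ :=
    ∑ j ∈ Finset.range (l + 1), Polynomial.C (l.choose j : ℝ) * Polynomial.X ^ (l + m - j - 1)
    with hP
  have hfun : (fun x : ℝ => ∑ j ∈ Finset.range (l + 1),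
      (l.choose j : ℝ) * x ^ (l + m - j - 1)) = fun x => P.eval x := by
    funext x
    simp [hP, Polynomial.eval_finset_sum]
  have key : iteratedDeriv (l - 1)
      (fun x : ℝ => ∑ j ∈ Finset.range (l + 1), (l.choose j : ℝ) * x ^ (l + m - j - 1)) (-1)
      = (derivative^[l - 1] P).eval (-1) := by
    rw [hfun, iteratedDeriv_poly_eval]
  constructor
  · rw [key, hP, Polynomial.iterate_derivative_sum]
    rw [Polynomial.eval_finset_sum]
    apply Finset.sum_congr rfl
    intro j hj
    have hjl : j ≤ l := Nat.lt_succ_iff.mp (Finset.mem_range.mp hj)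
    rw [Polynomial.iterate_derivative_C_mul, Polynomial.iterate_derivative_X_pow_eq_natCast_mul]
    have h1 : l + m - j - 1 - (l - 1) = m - j := by omega
    have h2 : l - 1 ≤ l + m - j - 1 := by omega
    have h3 : ((l + m - j - 1).descFactorial (l - 1) : ℝ)
        = ((l + m - j - 1).factorial : ℝ) / ((m - j).factorial : ℝ) := by
      have := Nat.factorial_mul_descFactorial h2
      rw [h1] at this
      field_simp
      exact_mod_cast (mul_comm _ _).trans this
    simp only [Polynomial.eval_mul, Polynomial.eval_C, Polynomial.eval_natCast,
      Polynomial.eval_pow, Polynomial.eval_X, h1, h3]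
    ring
  · have hPfac : P = Polynomial.X ^ (m - 1) * (Polynomial.X + 1) ^ l := by
      rw [hP, add_pow, Finset.mul_sum, ← Finset.sum_range_reflect]
      apply Finset.sum_congr rfl
      intro j hj
      have hjl : j ≤ l := Nat.lt_succ_iff.mp (Finset.mem_range.mp hj)
      have e : l + 1 - 1 - j = l - j := by omega
      rw [e, Nat.choose_symm hjl, one_pow, mul_one, ← mul_assoc, ← pow_add]
      have : l + m - (l - j) - 1 = m - 1 + (l - (l - j)) := by omega
      rw [this, Nat.sub_sub_self hjl, pow_add]
      rw [Polynomial.C_eq_natCast]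
      ring
    rw [key, hPfac]
    have hdvd : (Polynomial.X + 1 : Polynomial ℝ) ^ (l - (l - 1)) ∣
        derivative^[l - 1] (Polynomial.X ^ (m - 1) * (Polynomial.X + 1) ^ l) :=
      Polynomial.pow_sub_dvd_iterate_derivative_of_pow_dvd (l - 1) (dvd_mul_left _ _)
    have h1 : l - (l - 1) = 1 := by omega
    rw [h1, pow_one] at hdvd
    obtain ⟨q, hq⟩ := hdvd
    rw [hq]
    simp
end

section
/- For natural numbers m, l with l ≤ m, the Gauss hypergeometric value ₂F₁(-l, -(m-l); 3/2; 1), defined as the (finite) sum ∑_{j=0}^{∞} ((-l)_j * (-(m-l))_j / (3/2)_j) * 1/j!, equals (1/C(m,l)) * (2m+1)! / ((2l+1)! * (2m-2l+1)!). -/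
/-!
Write `b = m - l`. The series is `₂F₁(-l, -b; 3/2; 1)`, and the Chu–Vandermonde identity
`∑ⱼ C(a,j) C(b,j) j! / (c)ⱼ = (c)_{a+b} / ((c)_a (c)_b)` evaluates it; the stated closed form is
this ratio at `c = 3/2`, rewritten with `(3/2)ₙ = (2n+1)! / (4ⁿ n!)`.

Chu–Vandermonde is proved by induction on `a`. With `t(a, j)` the summand, Zeilberger's
certificate `G(j + 1) = -C(a,j) C(b,j+1) (j+1)! / (c)ⱼ` satisfies
`(c + a) t(a+1, j) - (c + a + b) t(a, j) = G(j+1) - G(j)`, so summing over `j` telescopes to the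
recurrence `(c + a) S(a+1) = (c + a + b) S(a)`, which the right-hand side also satisfies.
-/

open Finset Polynomial

theorem Nat.cast_succ_mul_choose_succ {R : Type*} [CommRing R] (n k : ℕ) :
    ((k : R) + 1) * n.choose (k + 1) = ((n : R) - k) * n.choose k := by
  rcases le_or_gt k n with hkn | hnk
  · have h := congrArg (Nat.cast (R := R)) (Nat.choose_succ_right_eq n k)
    push_cast [Nat.cast_sub hkn] at h
    linear_combination h
  · simp [Nat.choose_eq_zero_of_lt hnk, Nat.choose_eq_zero_of_lt (hnk.trans k.lt_succ_self)]

theorem ascPochhammer_eval_neg_natCast {R : Type*} [CommRing R] (n j : ℕ) :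
    (ascPochhammer R j).eval (-(n : R)) = (-1) ^ j * j.factorial * n.choose j := by
  rw [ascPochhammer_eval_neg_eq_descPochhammer, descPochhammer_eval_eq_descFactorial,
    Nat.descFactorial_eq_factorial_mul_choose, Nat.cast_mul, mul_assoc]

theorem ascPochhammer_eval_ne_zero {K : Type*} [Field K] {c : K} (hc : ∀ k : ℕ, c + k ≠ 0)
    (n : ℕ) : (ascPochhammer K n).eval c ≠ 0 := by
  induction n with
  | zero => simp
  | succ n ih => rw [ascPochhammer_succ_eval]; exact mul_ne_zero ih (hc n)

theorem ascPochhammer_eval_three_halves {K : Type*} [Field K] [CharZero K] (n : ℕ) :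
    4 ^ n * n.factorial * (ascPochhammer K n).eval (3 / 2) = (2 * n + 1).factorial := by
  induction n with
  | zero => simp
  | succ n ih =>
    rw [ascPochhammer_succ_eval, show 2 * (n + 1) + 1 = 2 * n + 1 + 1 + 1 by ring,
      Nat.factorial_succ, Nat.factorial_succ, Nat.factorial_succ]
    push_cast
    linear_combination (2 * (n : K) + 3) * (2 * n + 2) * ih

section ChuVandermonde

variable {K : Type*} [Field K] (c : K) (b : ℕ)

noncomputable def chuTerm (a j : ℕ) : K :=
  a.choose j * b.choose j * j.factorial / (ascPochhammer K j).eval c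

noncomputable def chuCert (a : ℕ) : ℕ → K
  | 0 => 0
  | j + 1 => -(a.choose j * b.choose (j + 1) * (j + 1).factorial / (ascPochhammer K j).eval c)

variable {c}

theorem chuTerm_wz (hc : ∀ k : ℕ, c + k ≠ 0) (a j : ℕ) :
    (c + a) * chuTerm c b (a + 1) j - (c + a + b) * chuTerm c b a j
      = chuCert c b a (j + 1) - chuCert c b a j := by
  cases j with
  | zero => simp [chuTerm, chuCert]
  | succ j =>
    have ha := Nat.cast_succ_mul_choose_succ (R := K) a j
    have hb := Nat.cast_succ_mul_choose_succ (R := K) b (j + 1)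
    simp only [chuTerm, chuCert, Nat.choose_succ_succ' a j, ascPochhammer_succ_eval,
      Nat.factorial_succ]
    have hpoch := ascPochhammer_eval_ne_zero hc j
    have hcj := hc j
    field_simp
    push_cast at hb ⊢
    linear_combination (a.choose (j + 1) * ((j + 1) * j.factorial) : K) * hb
      - (b.choose (j + 1) * ((j + 1) * j.factorial) : K) * ha

theorem sum_range_chuTerm_succ (hc : ∀ k : ℕ, c + k ≠ 0) (a : ℕ) :
    (c + a) * ∑ j ∈ range (a + 2), chuTerm c b (a + 1) j
      = (c + a + b) * ∑ j ∈ range (a + 1), chuTerm c b a j := by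
  have htel : ∑ j ∈ range (a + 2),
      ((c + a) * chuTerm c b (a + 1) j - (c + a + b) * chuTerm c b a j) = 0 := by
    rw [sum_congr rfl fun j _ ↦ chuTerm_wz b hc a j, sum_range_sub]
    simp [chuCert]
  have hlast : chuTerm c b a (a + 1) = 0 := by simp [chuTerm]
  rw [sum_sub_distrib, ← mul_sum, ← mul_sum, sum_range_succ (chuTerm c b a) (a + 1), hlast,
    add_zero] at htel
  linear_combination htel

theorem sum_range_chuTerm (hc : ∀ k : ℕ, c + k ≠ 0) (a : ℕ) :
    ∑ j ∈ range (a + 1), chuTerm c b a j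
      = (ascPochhammer K (a + b)).eval c
          / ((ascPochhammer K a).eval c * (ascPochhammer K b).eval c) := by
  have hpoch := ascPochhammer_eval_ne_zero hc
  induction a with
  | zero => simp [chuTerm, hpoch b]
  | succ a ih =>
    have hrec := sum_range_chuTerm_succ b hc a
    rw [ih] at hrec
    rw [show a + 1 + b = a + b + 1 by ring, ascPochhammer_succ_eval, ascPochhammer_succ_eval]
    have hpa := hpoch a
    have hpb := hpoch b
    have hca := hc a
    push_cast
    field_simp at hrec ⊢
    linear_combination hrec

theorem chuTerm_eq [CharZero K] (a j : ℕ) :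
    chuTerm c b a j = (ascPochhammer K j).eval (-(a : K)) * (ascPochhammer K j).eval (-(b : K))
      / (ascPochhammer K j).eval c * (1 / j.factorial) := by
  have hfact : (j.factorial : K) ≠ 0 := Nat.cast_ne_zero.mpr j.factorial_ne_zero
  have hsign : ((-1 : K) ^ j) ^ 2 = 1 := by rw [← pow_mul, pow_mul', neg_one_sq, one_pow]
  have hnum : (-1) ^ j * j.factorial * a.choose j * ((-1) ^ j * j.factorial * b.choose j)
      * (1 / j.factorial) = (a.choose j * b.choose j * j.factorial : K) := by
    field_simp
    linear_combination (a.choose j * b.choose j : K) * hsign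
  rw [ascPochhammer_eval_neg_natCast, ascPochhammer_eval_neg_natCast, div_mul_eq_mul_div, hnum,
    chuTerm]

end ChuVandermonde

theorem ascPochhammer_eval_three_halves_div (a b : ℕ) :
    (ascPochhammer ℚ (a + b)).eval (3 / 2)
        / ((ascPochhammer ℚ a).eval (3 / 2) * (ascPochhammer ℚ b).eval (3 / 2))
      = (2 * (a + b) + 1).factorial
          / ((a + b).choose a * (2 * a + 1).factorial * (2 * b + 1).factorial) := by
  have hchoose : ((a + b).choose a * a.factorial * b.factorial : ℚ) = (a + b).factorial := by
    have h := Nat.choose_mul_factorial_mul_factorial (Nat.le_add_right a b)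
    rw [Nat.add_sub_cancel_left] at h
    exact_mod_cast h
  have hP (n : ℕ) :
      (ascPochhammer ℚ n).eval (3 / 2) = (2 * n + 1).factorial / (4 ^ n * n.factorial) := by
    rw [← ascPochhammer_eval_three_halves]
    field_simp
  rw [hP, hP, hP]
  have hpos := Nat.choose_pos (Nat.le_add_right a b)
  field_simp
  linear_combination (4 : ℚ) ^ (a + b) * hchoose

theorem gauss_hypergeometric_value (m l : ℕ) (hlm : l ≤ m) :
    ∑ j ∈ Finset.range (min l (m - l) + 1),
      ((ascPochhammer ℚ j).eval (-(l : ℚ)) * (ascPochhammer ℚ j).eval (-((m : ℚ) - (l : ℚ)))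
        / (ascPochhammer ℚ j).eval (3 / 2)) * (1 / (j.factorial : ℚ))
      = (1 / (m.choose l : ℚ)) * ((2 * m + 1).factorial : ℚ) /
          (((2 * l + 1).factorial : ℚ) * ((2 * m - 2 * l + 1).factorial : ℚ)) := by
  obtain ⟨b, rfl⟩ := Nat.exists_eq_add_of_le hlm
  have hb : -(((l + b : ℕ) : ℚ) - l) = -(b : ℚ) := by push_cast; ring
  simp only [hb, ← chuTerm_eq, Nat.add_sub_cancel_left]
  have hextend : ∑ j ∈ range (min l b + 1), chuTerm (3 / 2 : ℚ) b l j
      = ∑ j ∈ range (l + 1), chuTerm (3 / 2 : ℚ) b l j := by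
    refine sum_subset (range_subset_range.mpr (by omega)) fun j hj hjmin ↦ ?_
    simp only [mem_range] at hj hjmin
    simp [chuTerm, Nat.choose_eq_zero_of_lt (show b < j by omega)]
  rw [hextend, sum_range_chuTerm b (fun k ↦ by positivity) l,
    ascPochhammer_eval_three_halves_div, show 2 * (l + b) - 2 * l = 2 * b by omega]
  ring
end

section
/- For natural numbers m ≥ 1, l ≥ 1, and n with l ≤ m and for every 1 ≤ μ ≤ n (summand index), the rearranged double sum identity holds: -∑_{j=1}^{min(l,n)} C(n,j) (l!/(l-j)!) (-α)^{-j} ∑_{k=0}^{n-j} C(n-j, k) ((l+k-1)!/((l-1)! α^k)) x^{n-j-k} = ∑_{j=1}^{n} C(n,j) ((l+j-1)!/((l-1)! α^j)) x^{n-j}, for all real α ≠ 0 and x, where n ≥ 1 and l ≥ 1 are natural numbers. -/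
open Finset PowerSeries

lemma poly_coeff_one_sub_pow (d j : ℕ) :
    ((1 - Polynomial.X : Polynomial ℝ) ^ d).coeff j = (-1 : ℝ) ^ j * d.choose j := by
  have h : (1 - Polynomial.X : Polynomial ℝ) = -(Polynomial.X + Polynomial.C (-1)) := by
    simp [sub_eq_add_neg, add_comm]
  rw [h, neg_pow]
  rw [show ((-1 : Polynomial ℝ) ^ d) = Polynomial.C ((-1 : ℝ) ^ d) by simp]
  rw [Polynomial.coeff_C_mul, Polynomial.coeff_X_add_C_pow]
  rcases le_or_gt j d with hle | hlt
  · rw [← mul_assoc, ← pow_add]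
    congr 1
    rw [show d + (d - j) = j + 2 * (d - j) by omega, pow_add, pow_mul]
    simp
  · rw [Nat.choose_eq_zero_of_lt hlt]
    ring

lemma ps_coeff_one_sub_pow (d j : ℕ) :
    (PowerSeries.coeff j) ((1 - PowerSeries.X) ^ d) = (-1 : ℝ) ^ j * d.choose j := by
  have h : ((((1 - Polynomial.X : Polynomial ℝ)) ^ d : Polynomial ℝ) : PowerSeries ℝ)
      = (1 - PowerSeries.X) ^ d := by
    push_cast
    norm_cast
  rw [← h, Polynomial.coeff_coe, poly_coeff_one_sub_pow]

lemma keyR (e s : ℕ) (hs : s ≠ 0) :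
    ∑ j ∈ Finset.range (s + 1),
      ((-1 : ℝ) ^ j * ((e + 1).choose j)) * (((e + (s - j)).choose e : ℕ) : ℝ) = 0 := by
  have h := PowerSeries.mk_add_choose_mul_one_sub_pow_eq_one (S := ℝ) e
  rw [mul_comm] at h
  have h2 := congrArg (PowerSeries.coeff s) h
  rw [PowerSeries.coeff_mul, Finset.Nat.sum_antidiagonal_eq_sum_range_succ_mk] at h2
  simp only [PowerSeries.coeff_mk, PowerSeries.coeff_one, hs, if_false] at h2
  rw [← h2]
  apply Finset.sum_congr rfl
  intro j hj
  rw [ps_coeff_one_sub_pow]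

lemma keyR' (e s : ℕ) (hs : 1 ≤ s) :
    ∑ j ∈ Finset.Icc 1 (min (e + 1) s),
      (-1 : ℝ) ^ j * ((e + 1).choose j) * (((e + (s - j)).choose e : ℕ) : ℝ)
      = -(((e + s).choose e : ℕ) : ℝ) := by
  have h := keyR e s (by omega)
  rw [Finset.sum_range_succ'] at h
  have h0 : ((-1 : ℝ) ^ 0 * ((e + 1).choose 0)) * (((e + (s - 0)).choose e : ℕ) : ℝ)
      = ((e + s).choose e : ℕ) := by simp
  have hrange : ∑ i ∈ Finset.range s,
      ((-1 : ℝ) ^ (i + 1) * ((e + 1).choose (i + 1))) * (((e + (s - (i + 1))).choose e : ℕ) : ℝ)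
      = -(((e + s).choose e : ℕ) : ℝ) := by
    rw [h0] at h; linarith
  have hicc : ∑ j ∈ Finset.Icc 1 s,
      (-1 : ℝ) ^ j * ((e + 1).choose j) * (((e + (s - j)).choose e : ℕ) : ℝ)
      = ∑ i ∈ Finset.range s,
      ((-1 : ℝ) ^ (i + 1) * ((e + 1).choose (i + 1))) * (((e + (s - (i + 1))).choose e : ℕ) : ℝ) := by
    rw [← Finset.Ico_add_one_right_eq_Icc, Finset.sum_Ico_eq_sum_range]
    rw [show s + 1 - 1 = s from rfl]
    exact Finset.sum_congr rfl (fun i _ => by rw [add_comm 1 i])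
  rw [← hicc] at hrange
  rw [← hrange]
  apply Finset.sum_subset
  · apply Finset.Icc_subset_Icc_right (min_le_right _ _)
  · intro j hj hj2
    simp only [Finset.mem_Icc, lt_min_iff, not_and, not_le, min_le_iff] at hj hj2
    have : e + 1 < j := by omega
    rw [Nat.choose_eq_zero_of_lt this]
    simp

lemma perterm (n l s j : ℕ) (α x : ℝ) (hα : α ≠ 0) (hj1 : 1 ≤ j) (hjl : j ≤ l) (hjs : j ≤ s)
    (hsn : s ≤ n) :
    (n.choose j : ℝ) * ((l.factorial : ℝ) / ((l - j).factorial : ℝ)) * (-α) ^ (-(j : ℤ)) *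
      (((n - j).choose (s - j) : ℝ) *
        (((l + (s - j) - 1).factorial : ℝ) / (((l - 1).factorial : ℝ) * α ^ (s - j))) *
        x ^ (n - j - (s - j)))
    = ((-1 : ℝ) ^ j * (l.choose j) * ((((l - 1) + (s - j)).choose (l - 1) : ℕ) : ℝ)) *
      ((n.choose s : ℝ) * (s.factorial : ℝ) * (α ^ s)⁻¹ * x ^ (n - s)) := by
  have hl1 : 1 ≤ l := le_trans hj1 hjl
  have hx : n - j - (s - j) = n - s := by omega
  have hidx : l + (s - j) - 1 = (l - 1) + (s - j) := by omega
  have hz : (-α) ^ (-(j : ℤ)) = (-1 : ℝ) ^ j * (α ^ j)⁻¹ := by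
    rw [zpow_neg, zpow_natCast, neg_pow, mul_inv, ← inv_pow, inv_neg, inv_one]
  have hc1 : (n.choose j : ℝ) = n.factorial / (j.factorial * (n - j).factorial) :=
    Nat.cast_choose ℝ (le_trans hjs hsn)
  have hc2 : ((n - j).choose (s - j) : ℝ)
      = (n - j).factorial / ((s - j).factorial * (n - s).factorial) := by
    rw [Nat.cast_choose ℝ (by omega : s - j ≤ n - j), show n - j - (s - j) = n - s by omega]
  have hc3 : (l.choose j : ℝ) = l.factorial / (j.factorial * (l - j).factorial) :=
    Nat.cast_choose ℝ hjl
  have hc4 : ((((l - 1) + (s - j)).choose (l - 1) : ℕ) : ℝ)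
      = ((l - 1) + (s - j)).factorial / ((l - 1).factorial * (s - j).factorial) := by
    rw [Nat.cast_choose ℝ (Nat.le_add_right _ _), Nat.add_sub_cancel_left]
  have hc5 : (n.choose s : ℝ) = n.factorial / (s.factorial * (n - s).factorial) :=
    Nat.cast_choose ℝ hsn
  have hαs : (α : ℝ) ^ s = α ^ j * α ^ (s - j) := by
    rw [← pow_add]; congr 1; omega
  rw [hx, hidx, hz, hc1, hc2, hc3, hc4, hc5, hαs]
  have f1 : (j.factorial : ℝ) ≠ 0 := Nat.cast_ne_zero.mpr (Nat.factorial_ne_zero _)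
  have f2 : ((n - j).factorial : ℝ) ≠ 0 := Nat.cast_ne_zero.mpr (Nat.factorial_ne_zero _)
  have f3 : ((l - j).factorial : ℝ) ≠ 0 := Nat.cast_ne_zero.mpr (Nat.factorial_ne_zero _)
  have f4 : ((s - j).factorial : ℝ) ≠ 0 := Nat.cast_ne_zero.mpr (Nat.factorial_ne_zero _)
  have f5 : ((n - s).factorial : ℝ) ≠ 0 := Nat.cast_ne_zero.mpr (Nat.factorial_ne_zero _)
  have f6 : ((l - 1).factorial : ℝ) ≠ 0 := Nat.cast_ne_zero.mpr (Nat.factorial_ne_zero _)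
  have f7 : (s.factorial : ℝ) ≠ 0 := Nat.cast_ne_zero.mpr (Nat.factorial_ne_zero _)
  have g1 : (α : ℝ) ^ j ≠ 0 := pow_ne_zero _ hα
  have g2 : (α : ℝ) ^ (s - j) ≠ 0 := pow_ne_zero _ hα
  field_simp

lemma pers (n l s : ℕ) (α x : ℝ) (hα : α ≠ 0) (hl : 1 ≤ l) (hs1 : 1 ≤ s) (hsn : s ≤ n) :
    ∑ j ∈ Finset.Icc 1 (min l s),
      (n.choose j : ℝ) * ((l.factorial : ℝ) / ((l - j).factorial : ℝ)) * (-α) ^ (-(j : ℤ)) *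
        (((n - j).choose (s - j) : ℝ) *
          (((l + (s - j) - 1).factorial : ℝ) / (((l - 1).factorial : ℝ) * α ^ (s - j))) *
          x ^ (n - j - (s - j)))
    = -((n.choose s : ℝ) *
        (((l + s - 1).factorial : ℝ) / (((l - 1).factorial : ℝ) * α ^ s)) * x ^ (n - s)) := by
  have step1 : ∑ j ∈ Finset.Icc 1 (min l s),
      (n.choose j : ℝ) * ((l.factorial : ℝ) / ((l - j).factorial : ℝ)) * (-α) ^ (-(j : ℤ)) *
        (((n - j).choose (s - j) : ℝ) *
          (((l + (s - j) - 1).factorial : ℝ) / (((l - 1).factorial : ℝ) * α ^ (s - j))) *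
          x ^ (n - j - (s - j)))
      = ∑ j ∈ Finset.Icc 1 (min l s),
        ((-1 : ℝ) ^ j * (l.choose j) * ((((l - 1) + (s - j)).choose (l - 1) : ℕ) : ℝ)) *
          ((n.choose s : ℝ) * (s.factorial : ℝ) * (α ^ s)⁻¹ * x ^ (n - s)) := by
    apply Finset.sum_congr rfl
    intro j hj
    simp only [Finset.mem_Icc, le_min_iff] at hj
    exact perterm n l s j α x hα hj.1 (by omega) (by omega) hsn
  rw [step1, ← Finset.sum_mul]
  have hmin : min ((l - 1) + 1) s = min l s := by congr 1; omega
  have hkey := keyR' (l - 1) s hs1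
  rw [hmin, show (l - 1) + 1 = l by omega] at hkey
  rw [hkey]
  have hc : ((((l - 1) + s).choose (l - 1) : ℕ) : ℝ)
      = ((l - 1) + s).factorial / ((l - 1).factorial * s.factorial) := by
    rw [Nat.cast_choose ℝ (Nat.le_add_right _ _), Nat.add_sub_cancel_left]
  rw [hc, show (l - 1) + s = l + s - 1 by omega]
  have f6 : ((l - 1).factorial : ℝ) ≠ 0 := Nat.cast_ne_zero.mpr (Nat.factorial_ne_zero _)
  have f7 : (s.factorial : ℝ) ≠ 0 := Nat.cast_ne_zero.mpr (Nat.factorial_ne_zero _)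
  have g1 : (α : ℝ) ^ s ≠ 0 := pow_ne_zero _ hα
  field_simp

theorem rearranged_double_sum_identity (m l n : ℕ) (hm : 1 ≤ m) (hl : 1 ≤ l) (hn : 1 ≤ n)
    (hlm : l ≤ m) (α x : ℝ) (hα : α ≠ 0) :
    -∑ j ∈ Finset.Icc 1 (min l n),
        (n.choose j : ℝ) * ((l.factorial : ℝ) / ((l - j).factorial : ℝ)) * (-α) ^ (-(j : ℤ)) *
          ∑ k ∈ Finset.range (n - j + 1),
            ((n - j).choose k : ℝ) *
              (((l + k - 1).factorial : ℝ) / (((l - 1).factorial : ℝ) * α ^ k)) *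
              x ^ (n - j - k)
      = ∑ j ∈ Finset.Icc 1 n,
          (n.choose j : ℝ) *
            (((l + j - 1).factorial : ℝ) / (((l - 1).factorial : ℝ) * α ^ j)) * x ^ (n - j) := by
  rw [neg_eq_iff_eq_neg, ← Finset.sum_neg_distrib]
  have hstep : ∀ s ∈ Finset.Icc 1 n,
      -((n.choose s : ℝ) *
          (((l + s - 1).factorial : ℝ) / (((l - 1).factorial : ℝ) * α ^ s)) * x ^ (n - s))
      = ∑ j ∈ Finset.Icc 1 (min l s),
          (n.choose j : ℝ) * ((l.factorial : ℝ) / ((l - j).factorial : ℝ)) * (-α) ^ (-(j : ℤ)) *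
            (((n - j).choose (s - j) : ℝ) *
              (((l + (s - j) - 1).factorial : ℝ) / (((l - 1).factorial : ℝ) * α ^ (s - j))) *
              x ^ (n - j - (s - j))) := by
    intro s hs
    simp only [Finset.mem_Icc] at hs
    exact (pers n l s α x hα hl hs.1 hs.2).symm
  rw [Finset.sum_congr rfl hstep]
  simp only [Finset.mul_sum]
  rw [Finset.sum_sigma', Finset.sum_sigma']
  apply Finset.sum_nbij' (fun p => (⟨p.1 + p.2, p.1⟩ : (_ : ℕ) × ℕ))
    (fun q => (⟨q.2, q.1 - q.2⟩ : (_ : ℕ) × ℕ))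
  · intro a ha
    simp only [Finset.mem_sigma, Finset.mem_Icc, Finset.mem_range, le_min_iff] at ha ⊢
    omega
  · intro a ha
    simp only [Finset.mem_sigma, Finset.mem_Icc, Finset.mem_range, le_min_iff] at ha ⊢
    omega
  · intro a ha
    simp only [Finset.mem_sigma, Finset.mem_Icc, Finset.mem_range] at ha
    simp only [Nat.add_sub_cancel_left]
  · intro a ha
    simp only [Finset.mem_sigma, Finset.mem_Icc, Finset.mem_range, le_min_iff] at ha
    have : a.2 + (a.1 - a.2) = a.1 := by omega
    simp only [this]
  · intro a ha
    simp only [Finset.mem_sigma, Finset.mem_Icc, Finset.mem_range] at ha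
    simp only [Nat.add_sub_cancel_left]
end
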